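/- arXiv:2506.21727 — 6 statements merged into one kernel-verified Lean document; each statement's English description precedes it below -/
import Mathlib

section
/- For every nonnegative integer c there exists a binary identical MDFA instance with two agents and at most 2(4c² + 1) dimensions (and the same number of items) that admits no weak sEFc allocation. Concretely, let r be the smallest power of two with r ≥ 4c² + 1, let H be an r × r Hadamard matrix (a {−1,+1}-matrix with mutually orthogonal rows), and set H* = (H + J)/2 where J is the all-ones matrix; the instance with r items, r dimensions, and identical valuations v_{jk} = H*_{jk} ∈ {0,1} admits no weak sEFc allocation. -/
/-!
Encode a two-agent allocation by its sign vector `x ∈ {±1}^r` (`x j = 1` iff agent `0` gets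
item `j`). With identical binary valuations `H* = (H + J) / 2`, weak sEF`c` bounds the
difference of the two bundle values in each dimension `k` by `c`, and twice that difference is
`(xᵀ H)_k + s` with `s = ∑ j, x j`. If row `j₀` of the Hadamard matrix `H` is all ones,
orthogonality of the rows gives `∑ k, ((xᵀ H)_k + s)² = r ((s + x j₀)² + r - 1) ≥ r (r - 1)`.
Hence `r - 1 ≤ 4 c²`, which fails for the Sylvester matrix whose order is the least power of
two exceeding `4 c² + 1`.
-/

/-- An allocation: a partition of the set of items among `n` agents. -/
def IsAllocation {n : ℕ} {Item : Type*} [DecidableEq Item]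
    (A : Fin n → Finset Item) : Prop :=
  (∀ g : Item, ∃ i : Fin n, g ∈ A i) ∧
  ∀ i i' : Fin n, i ≠ i' → Disjoint (A i) (A i')

/-- Weak simultaneous envy-freeness up to `c` goods: for every pair of distinct
agents and every dimension, envy in that dimension can be eliminated by removing
at most `c` items (possibly different ones per dimension). -/
def WeakSEF {n : ℕ} {Item Dim : Type*} [DecidableEq Item]
    (v : Fin n → Item → Dim → ℕ) (A : Fin n → Finset Item) (c : ℕ) : Prop :=
  ∀ i i' : Fin n, i ≠ i' → ∀ k : Dim,
    ∃ X : Finset Item, X ⊆ A i' ∧ X.card ≤ c ∧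
      ∑ g ∈ A i' \ X, v i g k ≤ ∑ g ∈ A i, v i g k

/-- Strong simultaneous envy-freeness up to `c` goods: for every pair of distinct
agents there is a single set of at most `c` items whose removal eliminates envy
simultaneously in every dimension. -/
def StrongSEF {n : ℕ} {Item Dim : Type*} [DecidableEq Item]
    (v : Fin n → Item → Dim → ℕ) (A : Fin n → Finset Item) (c : ℕ) : Prop :=
  ∀ i i' : Fin n, i ≠ i' → ∃ X : Finset Item, X ⊆ A i' ∧ X.card ≤ c ∧
    ∀ k : Dim, ∑ g ∈ A i' \ X, v i g k ≤ ∑ g ∈ A i, v i g k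

theorem WeakSEF.sum_le_sum_add {n : ℕ} {Item Dim : Type*} [DecidableEq Item]
    {v : Fin n → Item → Dim → ℕ} {A : Fin n → Finset Item} {c : ℕ} (h : WeakSEF v A c)
    {i i' : Fin n} (hii' : i ≠ i') (hv : ∀ g k, v i g k ≤ 1) (k : Dim) :
    ∑ g ∈ A i', v i g k ≤ ∑ g ∈ A i, v i g k + c := by
  obtain ⟨X, hXA, hXc, henvy⟩ := h i i' hii' k
  have hX : ∑ g ∈ X, v i g k ≤ X.card := by
    simpa using Finset.sum_le_card_nsmul X _ 1 fun g _ => hv g k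
  rw [← Finset.sum_sdiff hXA]
  omega

theorem IsAllocation.compl_eq {ι : Type*} [Fintype ι] [DecidableEq ι] {A : Fin 2 → Finset ι}
    (hA : IsAllocation A) : (A 0)ᶜ = A 1 := by
  ext g
  rw [Finset.mem_compl]
  refine ⟨fun hg => ?_, fun hg => Finset.disjoint_right.mp (hA.2 0 1 (by decide)) hg⟩
  obtain ⟨i, hi⟩ := hA.1 g
  fin_cases i
  exacts [absurd hi hg, hi]

theorem IsAllocation.sum_sub_sum_eq {ι R : Type*} [Fintype ι] [DecidableEq ι] [CommRing R]
    {A : Fin 2 → Finset ι} (hA : IsAllocation A) (f : ι → R) :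
    ∑ g ∈ A 0, f g - ∑ g ∈ A 1, f g = ∑ g, (if g ∈ A 0 then 1 else -1) * f g := by
  rw [← Finset.sum_add_sum_compl (A 0), hA.compl_eq, sub_eq_add_neg, ← Finset.sum_neg_distrib]
  congr 1 <;> refine Finset.sum_congr rfl fun g hg => ?_
  · rw [if_pos hg, one_mul]
  · rw [if_neg (by rwa [← hA.compl_eq, Finset.mem_compl] at hg), neg_one_mul]

namespace Matrix

open scoped Kronecker

variable {ι : Type*}

def hadamardValuation (H : Matrix ι ι ℤ) (j k : ι) : ℕ :=
  if H j k = 1 then 1 else 0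

theorem hadamardValuation_le_one (H : Matrix ι ι ℤ) (j k : ι) : hadamardValuation H j k ≤ 1 := by
  unfold hadamardValuation; split_ifs <;> simp

variable [Fintype ι] [DecidableEq ι]

theorem IsHadamard.two_mul_hadamardValuation {H : Matrix ι ι ℤ} (hH : H.IsHadamard) (j k : ι) :
    2 * (hadamardValuation H j k : ℤ) = H j k + 1 := by
  unfold hadamardValuation
  rcases Unitary.mem_iff_eq_one_or_eq_neg_one.mp (hH.apply_mem j k) with h | h <;> simp [h]

theorem IsHadamard.vecMul_dotProduct_vecMul {R : Type*} [CommRing R] [StarRing R]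
    [TrivialStar R] {H : Matrix ι ι R} (hH : H.IsHadamard) (x y : ι → R) :
    x ᵥ* H ⬝ᵥ y ᵥ* H = Fintype.card ι * (x ⬝ᵥ y) := by
  rw [← dotProduct_mulVec, ← mulVec_transpose, mulVec_mulVec,
    ← conjTranspose_eq_transpose_of_trivial, hH.mul_conjTranspose, smul_mulVec, one_mulVec,
    dotProduct_smul, smul_eq_mul]

theorem IsHadamard.card_mul_card_sub_one_le_sum_sq {H : Matrix ι ι ℤ} (hH : H.IsHadamard)
    {j₀ : ι} (hj₀ : ∀ k, H j₀ k = 1) {x : ι → ℤ} (hx : ∀ j, x j = 1 ∨ x j = -1) :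
    (Fintype.card ι : ℤ) * (Fintype.card ι - 1) ≤ ∑ k, ((x ᵥ* H) k + ∑ j, x j) ^ 2 := by
  set r : ℤ := (Fintype.card ι : ℤ)
  set s := ∑ j, x j
  set a := x ᵥ* H
  have hx_sq : ∀ j, x j * x j = 1 := fun j => by rcases hx j with h | h <;> simp [h]
  have hnorm : a ⬝ᵥ a = r * r := by
    rw [hH.vecMul_dotProduct_vecMul, dotProduct, Finset.sum_congr rfl fun j _ => hx_sq j]
    simp [r]
  have hsum : a ⬝ᵥ 1 = r * x j₀ := by
    have hrow : Pi.single j₀ 1 ᵥ* H = 1 := by ext k; simp [hj₀]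
    rw [← hrow, hH.vecMul_dotProduct_vecMul, dotProduct_single, mul_one]
  have hexpand : ∑ k, (a k + s) ^ 2 = r * ((s + x j₀) ^ 2 + r - 1) :=
    calc ∑ k, (a k + s) ^ 2 = ∑ k, (a k * a k + 2 * s * a k + s ^ 2) :=
          Finset.sum_congr rfl fun k _ => by ring
      _ = a ⬝ᵥ a + 2 * s * (a ⬝ᵥ 1) + r * s ^ 2 := by
          simp [Finset.sum_add_distrib, dotProduct, Finset.mul_sum, r]
      _ = r * ((s + x j₀) ^ 2 + r - 1) := by
          rw [hnorm, hsum]; linear_combination (-r) * hx_sq j₀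
  rw [hexpand]
  exact mul_le_mul_of_nonneg_left (by linarith [sq_nonneg (s + x j₀)]) (by positivity)

theorem IsHadamard.card_le_of_weakSEF {H : Matrix ι ι ℤ} (hH : H.IsHadamard) {j₀ : ι}
    (hj₀ : ∀ k, H j₀ k = 1) {A : Fin 2 → Finset ι} (hA : IsAllocation A) {c : ℕ}
    (hW : WeakSEF (fun _ : Fin 2 => hadamardValuation H) A c) :
    Fintype.card ι ≤ 4 * c ^ 2 + 1 := by
  set v := hadamardValuation H
  set x : ι → ℤ := fun g => if g ∈ A 0 then 1 else -1
  have hx : ∀ j, x j = 1 ∨ x j = -1 := fun j => by by_cases h : j ∈ A 0 <;> simp [x, h]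
  have hdim : ∀ k, ((x ᵥ* H) k + ∑ j, x j) ^ 2 ≤ 4 * c ^ 2 := fun k => by
    have hsigned : (x ᵥ* H) k + ∑ j, x j =
        2 * (∑ g ∈ A 0, (v g k : ℤ) - ∑ g ∈ A 1, (v g k : ℤ)) := by
      rw [hA.sum_sub_sum_eq, Finset.mul_sum, vecMul, dotProduct, ← Finset.sum_add_distrib]
      refine Finset.sum_congr rfl fun j _ => ?_
      rw [mul_left_comm, hH.two_mul_hadamardValuation]
      ring
    have h01 := hW.sum_le_sum_add (i := 0) (i' := 1) (by decide)
      (hadamardValuation_le_one H) k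
    have h10 := hW.sum_le_sum_add (i := 1) (i' := 0) (by decide)
      (hadamardValuation_le_one H) k
    zify at h01 h10
    have hsq : (∑ g ∈ A 0, (v g k : ℤ) - ∑ g ∈ A 1, (v g k : ℤ)) ^ 2 ≤ c ^ 2 :=
      sq_le_sq' (by linarith) (by linarith)
    rw [hsigned, mul_pow]
    linarith
  have hlower := hH.card_mul_card_sub_one_le_sum_sq hj₀ hx
  have hupper : ∑ k, ((x ᵥ* H) k + ∑ j, x j) ^ 2 ≤ Fintype.card ι * (4 * c ^ 2) :=
    (Finset.sum_le_card_nsmul _ _ _ fun k _ => hdim k).trans_eq (by simp)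
  have hcard : (0 : ℤ) < Fintype.card ι := by
    exact_mod_cast Fintype.card_pos_iff.mpr ⟨j₀⟩
  zify
  linarith [le_of_mul_le_mul_left (hlower.trans hupper) hcard]

theorem isHadamard_two : (!![1, 1; 1, -1] : Matrix (Fin 2) (Fin 2) ℤ).IsHadamard := by
  rw [isHadamard_iff_mul_conjTranspose (.of_ne_zero (by simp))]
  refine ⟨fun i j => Unitary.mem_iff_eq_one_or_eq_neg_one.mpr ?_, ?_⟩
  · fin_cases i <;> fin_cases j <;> simp
  · ext i j
    fin_cases i <;> fin_cases j <;> simp [mul_apply, Fin.sum_univ_two]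

theorem exists_isHadamard_pow_two (t : ℕ) :
    ∃ H : Matrix (Fin (2 ^ t)) (Fin (2 ^ t)) ℤ, H.IsHadamard ∧ ∃ j₀, ∀ k, H j₀ k = 1 := by
  induction t with
  | zero =>
    refine ⟨of fun _ _ => 1, ?_, 0, fun _ => rfl⟩
    rw [isHadamard_iff_mul_conjTranspose (.of_ne_zero (by simp))]
    refine ⟨fun _ _ => by simp, ?_⟩
    ext i j
    fin_cases i; fin_cases j
    simp [mul_apply]
  | succ t ih =>
    obtain ⟨H, hH, j₀, hj₀⟩ := ih
    let e : Fin (2 ^ t) × Fin 2 ≃ Fin (2 ^ (t + 1)) :=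
      finProdFinEquiv.trans (finCongr (pow_succ 2 t).symm)
    refine ⟨reindex e e (H ⊗ₖ !![1, 1; 1, -1]), (hH.kronecker isHadamard_two).reindex e e,
      e (j₀, 0), fun k => ?_⟩
    obtain ⟨⟨k, l⟩, rfl⟩ := e.surjective k
    fin_cases l <;> simp [hj₀]

end Matrix

/-- For every nonnegative integer `c` there is a binary identical
MDFA instance with two agents and at most `2 * (4 * c ^ 2 + 1)` dimensions (and the
same number of items) that admits no weak sEF`c` allocation. -/
theorem no_weak_sEFc_quadratic_dims (c : ℕ) :
    ∃ r : ℕ, r ≤ 2 * (4 * c ^ 2 + 1) ∧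
      ∃ v : Fin r → Fin r → ℕ,
        (∀ j k : Fin r, v j k ≤ 1) ∧
        ∀ A : Fin 2 → Finset (Fin r), IsAllocation A →
          ¬ WeakSEF (fun (_ : Fin 2) => v) A c := by
  set t := Nat.log 2 (4 * c ^ 2 + 1) + 1
  obtain ⟨H, hH, j₀, hj₀⟩ := Matrix.exists_isHadamard_pow_two t
  refine ⟨2 ^ t, ?_, Matrix.hadamardValuation H, Matrix.hadamardValuation_le_one H,
    fun A hA hW => ?_⟩
  · rw [pow_succ, mul_comm]
    exact Nat.mul_le_mul_left 2 (Nat.pow_log_le_self 2 (by positivity))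
  · have hle := hH.card_le_of_weakSEF hj₀ hA hW
    rw [Fintype.card_fin] at hle
    exact (Nat.lt_pow_succ_log_self one_lt_two _).not_ge hle
end

section
/- For every nonnegative integer c there exists a binary identical MDFA instance with two agents, 2c + 1 items and 2c + 1 dimensions that admits no strong sEFc allocation. Concretely, the instance with items g_1, …, g_{2c+1}, dimensions [2c+1], and identical valuations v_{jk} = 1 if j = k and v_{jk} = 0 otherwise admits no strong sEFc allocation. -/
/-!
With the identity valuation, dimension `k` of a bundle just records whether `g_k` is in it. Since
bundles are disjoint, an agent values every item of another agent's bundle at zero, so strong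
sEF`c` forces each bundle to lie inside the removed set and hence to have at most `c` items.
Two bundles of at most `c` items cannot cover `2c + 1` items.
-/

open Finset

section IdentityValuation

variable {Item : Type*} [DecidableEq Item]

theorem subset_of_forall_sum_ite_eq_le {S T X : Finset Item} (hST : Disjoint S T)
    (h : ∀ k : Item, ∑ g ∈ T \ X, (if g = k then 1 else 0) ≤ ∑ g ∈ S, (if g = k then 1 else 0)) :
    T ⊆ X := by
  intro k hkT
  by_contra hkX
  have hk := h k
  rw [sum_ite_eq', sum_ite_eq', if_pos (mem_sdiff.mpr ⟨hkT, hkX⟩)] at hk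
  have hkS : k ∈ S := by
    by_contra hkS
    rw [if_neg hkS] at hk
    exact absurd hk (by norm_num)
  exact disjoint_left.mp hST hkS hkT

theorem card_le_of_strongSEF_ite_eq {n c : ℕ} {A : Fin n → Finset Item}
    (hdisj : ∀ i i' : Fin n, i ≠ i' → Disjoint (A i) (A i'))
    (hS : StrongSEF (fun (_ : Fin n) (j k : Item) => if j = k then 1 else 0) A c)
    {i i' : Fin n} (hii' : i ≠ i') : (A i').card ≤ c := by
  obtain ⟨X, -, hXcard, henvy⟩ := hS i i' hii'
  exact (card_le_card (subset_of_forall_sum_ite_eq_le (hdisj i i' hii') henvy)).trans hXcard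

theorem card_le_sum_card_of_isAllocation [Fintype Item] {n : ℕ} {A : Fin n → Finset Item}
    (hA : IsAllocation A) : Fintype.card Item ≤ ∑ i, (A i).card := by
  have hcover : (univ : Finset Item) ⊆ univ.biUnion A := fun g _ => by
    obtain ⟨i, hi⟩ := hA.1 g
    exact mem_biUnion.mpr ⟨i, mem_univ i, hi⟩
  exact (card_le_card hcover).trans card_biUnion_le

theorem not_strongSEF_ite_eq [Fintype Item] {n c : ℕ} (hn : 2 ≤ n)
    (hcard : n * c < Fintype.card Item) {A : Fin n → Finset Item} (hA : IsAllocation A) :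
    ¬ StrongSEF (fun (_ : Fin n) (j k : Item) => if j = k then 1 else 0) A c := by
  intro hS
  have : Nontrivial (Fin n) := Fin.nontrivial_iff_two_le.mpr hn
  have hbundle : ∀ i' : Fin n, (A i').card ≤ c := fun i' => by
    obtain ⟨i, hii'⟩ := exists_ne i'
    exact card_le_of_strongSEF_ite_eq hA.2 hS hii'
  have htotal : ∑ i, (A i).card ≤ n * c := by
    simpa using sum_le_sum fun i (_ : i ∈ univ) => hbundle i
  exact absurd ((card_le_sum_card_of_isAllocation hA).trans htotal) (not_le.mpr hcard)

end IdentityValuation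

/-- For every nonnegative integer `c`, the binary identical
instance with two agents, `2c+1` items, `2c+1` dimensions, and valuations
`v j k = 1` iff `j = k` admits no strong sEF`c` allocation. -/
theorem no_strong_sEFc_identity_instance (c : ℕ) :
    ∀ A : Fin 2 → Finset (Fin (2 * c + 1)), IsAllocation A →
      ¬ StrongSEF (fun (_ : Fin 2) (j k : Fin (2 * c + 1)) =>
          if j = k then 1 else 0) A c := fun _ hA =>
  not_strongSEF_ite_eq le_rfl (by simp) hA
end

section
/- Every MDFA instance with two agents and ℓ dimensions admits a strong sEF(2ℓ − 1) allocation. Consequently, for every integer c ≥ 2ℓ − 1, a strong sEFc allocation exists. -/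
/-
Let `x ∈ [0,1]^M` be a fractional allocation giving agent 0 the fraction `x g` of every good `g`
and agent 1 the rest; `x ≡ 1/2` gives both agents exactly half of their value in every dimension.
Fixing agent 0's `ℓ` shares and the first `ℓ - 1` shares of agent 1, and only requiring that the
last one does not decrease, is `2ℓ - 1` linear conditions. As long as more than `2ℓ - 1`
coordinates are fractional, some direction supported on them preserves these conditions, and moving
along it until a coordinate hits `0` or `1` makes one more coordinate integral. Round the resulting
`x` at `1/2`: since each agent still values its fractional share at least half of everything, it
does not envy the other bundle once the (at most `2ℓ - 1`) fractional goods in it are removed.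
-/

open Finset Module

lemma exists_ne_zero_map_eq_zero_of_finrank_lt {K ι V : Type*} [Field K] [Fintype ι]
    [AddCommGroup V] [Module K V] [FiniteDimensional K V] (φ : (ι → K) →ₗ[K] V) (s : Finset ι)
    (hs : finrank K V < #s) : ∃ d ≠ 0, φ d = 0 ∧ ∀ i ∉ s, d i = 0 := by
  let f := φ ∘ₗ Function.ExtendByZero.linearMap K (Subtype.val : s → ι)
  obtain ⟨e, he, he0⟩ := (Submodule.ne_bot_iff _).1 <|
    f.ker_ne_bot_of_finrank_lt (by simpa using hs)
  refine ⟨Function.extend Subtype.val e 0, fun h => he0 ?_, he, fun i hi => ?_⟩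
  · funext a
    simpa [Subtype.val_injective.extend_apply] using congrFun h a
  · exact Function.extend_apply' _ _ _ (by simpa using hi)

section

variable {K : Type*} [Field K] [LinearOrder K] [IsStrictOrderedRing K]

lemma exists_add_mul_notMem_Ioo {a b : K} (ha : a ∈ Set.Icc 0 1) (hb : b ≠ 0) :
    ∃ τ, 0 ≤ τ ∧ (∀ s ∈ Set.Icc 0 τ, a + s * b ∈ Set.Icc (0 : K) 1) ∧
      a + τ * b ∉ Set.Ioo (0 : K) 1 := by
  obtain ⟨ha0, ha1⟩ := ha
  rcases hb.lt_or_gt with hb | hb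
  · refine ⟨a / -b, div_nonneg ha0 (by linarith), fun s ⟨hs0, hs⟩ => ⟨?_, ?_⟩, ?_⟩
    · have := (le_div_iff₀ (neg_pos.2 hb)).1 hs
      linarith
    · nlinarith
    · simp [div_neg, div_mul_cancel₀ _ hb.ne]
  · refine ⟨(1 - a) / b, div_nonneg (by linarith) hb.le, fun s ⟨hs0, hs⟩ => ⟨?_, ?_⟩, ?_⟩
    · nlinarith
    · have := (le_div_iff₀ hb).1 hs
      linarith
    · simp [div_mul_cancel₀ _ hb.ne']

variable {ι : Type*} [Fintype ι]

lemma exists_add_smul_mem_Icc_notMem_Ioo {x d : ι → K} (hx : x ∈ Set.Icc 0 1) (hd : d ≠ 0) :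
    ∃ t : K, 0 ≤ t ∧ x + t • d ∈ Set.Icc 0 1 ∧ ∃ i, d i ≠ 0 ∧ (x + t • d) i ∉ Set.Ioo 0 1 := by
  choose! τ hτ0 hτIcc hτIoo using fun i (hi : d i ≠ 0) =>
    exists_add_mul_notMem_Ioo ⟨hx.1 i, hx.2 i⟩ hi
  obtain ⟨j, hj⟩ := Function.ne_iff.1 hd
  obtain ⟨i₀, hi₀, hmin⟩ := exists_min_image {i | d i ≠ 0} τ ⟨j, by simpa using hj⟩
  rw [mem_filter_univ] at hi₀
  have hmem : ∀ i, (x + τ i₀ • d) i ∈ Set.Icc 0 1 := fun i => by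
    by_cases hi : d i = 0
    · simpa [hi] using And.intro (hx.1 i) (hx.2 i)
    · exact hτIcc i hi _ ⟨hτ0 i₀ hi₀, hmin i (by simpa using hi)⟩
  exact ⟨τ i₀, hτ0 i₀ hi₀, ⟨fun i => (hmem i).1, fun i => (hmem i).2⟩, i₀, hi₀, hτIoo i₀ hi₀⟩

def fractionalCoords (x : ι → K) : Finset ι := {i | x i ∈ Set.Ioo 0 1}

variable {V : Type*} [AddCommGroup V] [Module K V] [FiniteDimensional K V]
  (φ : (ι → K) →ₗ[K] V) (ψ : (ι → K) →ₗ[K] K)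

lemma exists_card_fractionalCoords_lt {x : ι → K} (hx : x ∈ Set.Icc 0 1)
    (hcard : finrank K V < #(fractionalCoords x)) :
    ∃ y ∈ Set.Icc 0 1, φ y = φ x ∧ ψ y ≤ ψ x ∧ #(fractionalCoords y) < #(fractionalCoords x) := by
  obtain ⟨d, hd, hφd, hsupp⟩ := exists_ne_zero_map_eq_zero_of_finrank_lt φ _ hcard
  wlog hψd : ψ d ≤ 0 generalizing d
  · exact this (-d) (neg_ne_zero.2 hd) (by simp [hφd]) (by simpa using hsupp)
      (by rw [map_neg, neg_nonpos]; exact (not_le.1 hψd).le)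
  have hsupp' : ∀ i, d i ≠ 0 → i ∈ fractionalCoords x := fun i => not_imp_comm.1 (hsupp i)
  obtain ⟨t, ht, hy, i₀, hi₀, hyi₀⟩ := exists_add_smul_mem_Icc_notMem_Ioo hx hd
  refine ⟨x + t • d, hy, by simp [hφd], by simpa using mul_nonpos_of_nonneg_of_nonpos ht hψd,
    card_lt_card ⟨fun i hi => ?_, fun h => hyi₀ ?_⟩⟩
  · by_cases hdi : d i = 0
    · simpa [fractionalCoords, hdi] using hi
    · exact hsupp' i hdi
  · simpa [fractionalCoords] using h (hsupp' i₀ hi₀)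

theorem exists_card_fractionalCoords_le_finrank {x : ι → K} (hx : x ∈ Set.Icc 0 1) :
    ∃ y ∈ Set.Icc 0 1, φ y = φ x ∧ ψ y ≤ ψ x ∧ #(fractionalCoords y) ≤ finrank K V := by
  induction hn : #(fractionalCoords x) using Nat.strong_induction_on generalizing x with
  | _ n ih =>
    by_cases hle : n ≤ finrank K V
    · exact ⟨x, hx, rfl, le_rfl, hn ▸ hle⟩
    obtain ⟨y, hy, hφy, hψy, hlt⟩ := exists_card_fractionalCoords_lt φ ψ hx (by omega)
    obtain ⟨z, hz, hφz, hψz, hcard⟩ := ih _ (hn ▸ hlt) hy rfl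
    exact ⟨z, hz, hφz.trans hφy, hψz.trans hψy, hcard⟩

lemma sum_filter_compl_eq_zero_le_sum_of_le_two_mul [DecidableEq ι] {x w : ι → K}
    (S : Finset ι) (hx : ∀ i, x i ≤ 1) (hS : ∀ i ∉ S, x i ≤ 1 / 2) (hw : ∀ i, 0 ≤ w i)
    (hshare : ∑ i, w i ≤ 2 * ∑ i, x i * w i) :
    ∑ i ∈ Sᶜ with x i = 0, w i ≤ ∑ i ∈ S, w i := by
  have hpt : ∀ i, 2 * (x i * w i) - w i ≤
      (if i ∈ S then w i else 0) - (if i ∈ Sᶜ then (if x i = 0 then w i else 0) else 0) :=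
    fun i => by
      by_cases hi : i ∈ S
      · simp only [hi, if_true, mem_compl, not_true_eq_false, if_false]
        nlinarith [hx i, hw i]
      · by_cases hxi : x i = 0
        · simp [hi, hxi]
        · simp only [hi, if_false, mem_compl, not_false_eq_true, if_true, hxi]
          nlinarith [hS i hi, hw i]
  have := sum_le_sum fun i (_ : i ∈ univ) => hpt i
  rw [sum_sub_distrib, sum_sub_distrib, ← mul_sum, sum_ite_mem, sum_ite_mem, univ_inter,
    univ_inter, ← sum_filter] at this
  linarith

lemma fractionalCoords_one_sub (x : ι → K) : fractionalCoords (1 - x) = fractionalCoords x := by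
  ext i
  simp only [fractionalCoords, mem_filter_univ, Set.mem_Ioo, Pi.sub_apply, Pi.one_apply]
  constructor <;> rintro ⟨h0, h1⟩ <;> constructor <;> linarith

lemma exists_subset_card_le_sum_sdiff_le [DecidableEq ι] {Dim : Type*} (w : ι → Dim → ℕ)
    {x : ι → K} (hx : x ∈ Set.Icc 0 1) {S : Finset ι} (hS : ∀ i ∉ S, x i ≤ 1 / 2)
    (hshare : ∀ k, ∑ i, (w i k : K) ≤ 2 * ∑ i, x i * w i k) {c : ℕ}
    (hc : #(fractionalCoords x) ≤ c) :
    ∃ X ⊆ Sᶜ, #X ≤ c ∧ ∀ k, ∑ i ∈ Sᶜ \ X, w i k ≤ ∑ i ∈ S, w i k := by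
  have hfrac : {i ∈ Sᶜ | x i ≠ 0} ⊆ fractionalCoords x := fun i hi => by
    simp only [mem_filter, mem_compl] at hi
    simp only [fractionalCoords, mem_filter_univ, Set.mem_Ioo]
    exact ⟨(hx.1 i).lt_of_ne' hi.2, by linarith [hS i hi.1]⟩
  refine ⟨_, filter_subset _ _, (card_le_card hfrac).trans hc, fun k => ?_⟩
  rw [← filter_not]
  simp only [not_not]
  exact_mod_cast sum_filter_compl_eq_zero_le_sum_of_le_two_mul S (fun i => hx.2 i) hS
    (fun i => Nat.cast_nonneg (w i k)) (hshare k)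

theorem strongSEF_of_two_mul_sum_le [DecidableEq ι] {Dim : Type*} (v : Fin 2 → ι → Dim → ℕ)
    {x : ι → K} (hx : x ∈ Set.Icc 0 1)
    (h₀ : ∀ k, ∑ i, (v 0 i k : K) ≤ 2 * ∑ i, x i * v 0 i k)
    (h₁ : ∀ k, ∑ i, (v 1 i k : K) ≤ 2 * ∑ i, (1 - x i) * v 1 i k)
    {c : ℕ} (hc : #(fractionalCoords x) ≤ c) :
    StrongSEF v ![({i | 1 / 2 < x i} : Finset ι), ({i | 1 / 2 < x i} : Finset ι)ᶜ] c := by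
  set S : Finset ι := {i | 1 / 2 < x i}
  have hS : ∀ i ∉ S, x i ≤ 1 / 2 := by simp [S]
  have hSc : ∀ i ∉ Sᶜ, (1 - x) i ≤ 1 / 2 := fun i hi => by
    simp only [mem_compl, not_not, mem_filter_univ, S] at hi
    simp only [Pi.sub_apply, Pi.one_apply]
    linarith
  have hx' : 1 - x ∈ Set.Icc 0 1 := ⟨sub_nonneg.2 hx.2, sub_le_self _ hx.1⟩
  intro i i' hii'
  fin_cases i <;> fin_cases i'
  · exact absurd rfl hii'
  · exact exists_subset_card_le_sum_sdiff_le (v 0) hx hS h₀ hc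
  · simpa using exists_subset_card_le_sum_sdiff_le (v 1) hx' hSc h₁
      (by rwa [fractionalCoords_one_sub])
  · exact absurd rfl hii'

theorem exists_two_mul_sum_le_card_fractionalCoords_le {ℓ : ℕ} (w₀ w₁ : ι → Fin ℓ → ℕ) :
    ∃ x : ι → K, x ∈ Set.Icc 0 1 ∧
      (∀ k, ∑ i, (w₀ i k : K) ≤ 2 * ∑ i, x i * w₀ i k) ∧
      (∀ k, ∑ i, (w₁ i k : K) ≤ 2 * ∑ i, (1 - x i) * w₁ i k) ∧
      #(fractionalCoords x) ≤ 2 * ℓ - 1 := by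
  cases ℓ with
  | zero => exact ⟨0, ⟨le_rfl, zero_le_one⟩, nofun, nofun, by simp [fractionalCoords]⟩
  | succ L =>
    let W₀ : Matrix ι (Fin (L + 1)) K := fun i k => w₀ i k
    let W₁ : Matrix ι (Fin (L + 1)) K := fun i k => w₁ i k
    -- keep agent 0's shares and all but the last of agent 1's shares fixed
    let φ := W₀.vecMulLinear.prod (LinearMap.funLeft K K Fin.castSucc ∘ₗ W₁.vecMulLinear)
    let ψ := LinearMap.proj (Fin.last L) ∘ₗ W₁.vecMulLinear
    have hhalf : (fun _ => 1 / 2 : ι → K) ∈ Set.Icc 0 1 :=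
      ⟨fun _ => by norm_num, fun _ => by norm_num⟩
    obtain ⟨x, hx, hφ, hψ, hcard⟩ := exists_card_fractionalCoords_le_finrank φ ψ hhalf
    have h₀ : ∀ k, ∑ i, x i * w₀ i k = ∑ i, 1 / 2 * (w₀ i k : K) := fun k =>
      congrFun (congrArg Prod.fst hφ) k
    have h₁ : ∀ k, ∑ i, x i * w₁ i k ≤ ∑ i, 1 / 2 * (w₁ i k : K) := Fin.lastCases hψ
      fun j => (congrFun (congrArg Prod.snd hφ) j).le
    refine ⟨x, hx, fun k => ?_, fun k => ?_, ?_⟩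
    · rw [h₀, ← mul_sum]
      linarith
    · have := h₁ k
      rw [← mul_sum] at this
      simp only [sub_mul, one_mul, sum_sub_distrib]
      linarith
    · refine hcard.trans_eq ?_
      rw [finrank_prod, finrank_fin_fun, finrank_fin_fun]
      omega

end

theorem isAllocation_compl {Item : Type*} [DecidableEq Item] [Fintype Item] (S : Finset Item) :
    IsAllocation ![S, Sᶜ] := by
  refine ⟨fun g => ?_, fun i i' hii' => ?_⟩
  · by_cases hg : g ∈ S
    · exact ⟨0, hg⟩
    · exact ⟨1, mem_compl.2 hg⟩
  · fin_cases i <;> fin_cases i'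
    all_goals first | exact absurd rfl hii' | simp [disjoint_compl_right, disjoint_compl_left]

/-- Every MDFA instance with two agents and `ℓ` dimensions admits
a strong sEF`(2ℓ - 1)` allocation; consequently a strong sEF`c` allocation exists
for every `c ≥ 2ℓ - 1`. -/
theorem strong_sEFc_exists_two_agents {Item : Type*} [Fintype Item] [DecidableEq Item]
    (ℓ : ℕ) (v : Fin 2 → Item → Fin ℓ → ℕ) (c : ℕ) (hc : 2 * ℓ - 1 ≤ c) :
    ∃ A : Fin 2 → Finset Item, IsAllocation A ∧ StrongSEF v A c := by
  obtain ⟨x, hx, h₀, h₁, hcard⟩ :=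
    exists_two_mul_sum_le_card_fractionalCoords_le (K := ℚ) (v 0) (v 1)
  exact ⟨_, isAllocation_compl _, strongSEF_of_two_mul_sum_le v hx h₀ h₁ (hcard.trans hc)⟩
end

section
/- Correctness of the reduction from monotone not-all-equal 3-SAT to weak sEF1 existence: let x_1, …, x_n be variables and C_1, …, C_m clauses, each clause C_k = (z_{k,1}, z_{k,2}, z_{k,3}) a triple of (unnegated) variables. Construct the MDFA instance with two identical agents, items M = {g_1, …, g_n}, dimensions L = [m], and valuations v_{jk} = 1 if x_j ∈ {z_{k,1}, z_{k,2}, z_{k,3}} and v_{jk} = 0 otherwise. Then this instance admits a weak sEF1 allocation if and only if there exists a truth assignment to x_1, …, x_n such that every clause C_k contains at least one true variable and at least one false variable. -/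
/-! With two agents an allocation is a set `B` of items together with its complement, and the
valuations only count the items of clause `k` in a bundle. Removing one good lowers that count
by at most one, so weak sEF1 says exactly that the two counts differ by at most one in every
dimension. As the counts add up to `3`, this means both are positive: `B` meets every clause
and misses none entirely, i.e. `j ↦ (j ∈ B)` is a not-all-equal assignment. -/

open Finset

section
variable {α : Type*} [DecidableEq α]

theorem exists_subset_card_le_card_inter_sdiff_le_iff (S B : Finset α) (c r : ℕ) :
    (∃ X ⊆ B, #X ≤ c ∧ #(S ∩ (B \ X)) ≤ r) ↔ #(S ∩ B) ≤ r + c := by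
  constructor
  · rintro ⟨X, -, hXc, hr⟩
    calc #(S ∩ B) ≤ #(S ∩ (B \ X) ∪ X) :=
          card_le_card (fun g ↦ by simp only [mem_inter, mem_union, mem_sdiff]; tauto)
      _ ≤ #(S ∩ (B \ X)) + #X := card_union_le _ _
      _ ≤ r + c := by omega
  · intro h
    obtain ⟨X, hXS, hXcard⟩ := exists_subset_card_eq (min_le_left #(S ∩ B) c)
    refine ⟨X, hXS.trans inter_subset_right, hXcard ▸ min_le_right _ _, ?_⟩
    rw [← inter_sdiff_assoc, card_sdiff_of_subset hXS]
    omega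

theorem weakSEF_indicator_iff {n : ℕ} {Dim : Type*} (S : Dim → Finset α)
    (A : Fin n → Finset α) (c : ℕ) :
    WeakSEF (fun _ g k ↦ if g ∈ S k then 1 else 0) A c ↔
      ∀ i i', i ≠ i' → ∀ k, #(S k ∩ A i') ≤ #(S k ∩ A i) + c := by
  simp only [WeakSEF, sum_boole, Nat.cast_id, filter_mem_eq_inter, inter_comm _ (S _),
    exists_subset_card_le_card_inter_sdiff_le_iff]

variable [Fintype α]

theorem isAllocation_fin_two_iff {A : Fin 2 → Finset α} :
    IsAllocation A ↔ A 1 = (A 0)ᶜ := by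
  constructor
  · rintro ⟨hcover, hdisj⟩
    ext g
    obtain ⟨i, hi⟩ := hcover g
    have h01 : g ∈ A 0 → g ∉ A 1 := fun h ↦ disjoint_left.mp (hdisj 0 1 (by decide)) h
    fin_cases i <;> simp_all
  · intro h
    refine ⟨fun g ↦ ?_, fun i i' hii' ↦ ?_⟩
    · by_cases hg : g ∈ A 0
      exacts [⟨0, hg⟩, ⟨1, by simpa [h]⟩]
    · fin_cases i <;> fin_cases i' <;> simp_all [disjoint_compl_left, disjoint_compl_right]

theorem exists_isAllocation_fin_two_iff {P : (Fin 2 → Finset α) → Prop} :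
    (∃ A, IsAllocation A ∧ P A) ↔ ∃ B, P ![B, Bᶜ] := by
  constructor
  · rintro ⟨A, hA, hP⟩
    have hA_eq : A = ![A 0, (A 0)ᶜ] := by
      funext i
      fin_cases i
      · rfl
      · exact isAllocation_fin_two_iff.mp hA
    exact ⟨A 0, hA_eq ▸ hP⟩
  · rintro ⟨B, hP⟩
    exact ⟨_, isAllocation_fin_two_iff.mpr rfl, hP⟩

theorem weakSEF_pair_indicator_iff {Dim : Type*} (S : Dim → Finset α) (B : Finset α)
    (c : ℕ) :
    WeakSEF (fun (_ : Fin 2) g k ↦ if g ∈ S k then 1 else 0) ![B, Bᶜ] c ↔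
      ∀ k, #(S k ∩ B) ≤ #(S k \ B) + c ∧ #(S k \ B) ≤ #(S k ∩ B) + c := by
  simp [weakSEF_indicator_iff, Fin.forall_fin_two, ← sdiff_eq_inter_compl, forall_and]

end

theorem card_le_card_add_one_iff_nonempty_of_card_eq_three {α : Type*} [DecidableEq α]
    {S B : Finset α} (hS : #S = 3) :
    (#(S ∩ B) ≤ #(S \ B) + 1 ∧ #(S \ B) ≤ #(S ∩ B) + 1) ↔
      (S ∩ B).Nonempty ∧ (S \ B).Nonempty := by
  have := card_inter_add_card_sdiff S B
  simp only [← card_pos]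
  omega

theorem exists_finset_splitting_iff_exists_bool {α ι : Type*} [Fintype α] [DecidableEq α]
    (S : ι → Finset α) :
    (∃ B : Finset α, ∀ k, (S k ∩ B).Nonempty ∧ (S k \ B).Nonempty) ↔
      ∃ σ : α → Bool, ∀ k, (∃ g ∈ S k, σ g = true) ∧ (∃ g ∈ S k, σ g = false) := by
  constructor
  · rintro ⟨B, hB⟩
    exact ⟨fun g ↦ decide (g ∈ B), by simpa [Finset.Nonempty] using hB⟩
  · rintro ⟨σ, hσ⟩
    exact ⟨univ.filter (σ · = true), by simpa [Finset.Nonempty] using hσ⟩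

/-- Correctness of the reduction from monotone not-all-equal
3-SAT to weak sEF1 existence: given clauses `C_k = (z k 0, z k 1, z k 2)` over
variables `Fin n` (three distinct variables per clause), the two-identical-agent
instance with items `Fin n`, dimensions `Fin m`, and valuations `v j k = 1` iff
variable `j` appears in clause `k`, admits a weak sEF1 allocation iff there is a
truth assignment making at least one variable true and at least one variable
false in every clause. -/
theorem weak_sEF1_iff_mnae3sat (n m : ℕ) (z : Fin m → Fin 3 → Fin n)
    (hz : ∀ k, Function.Injective (z k)) :
    (∃ A : Fin 2 → Finset (Fin n), IsAllocation A ∧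
        WeakSEF (fun (_ : Fin 2) (j : Fin n) (k : Fin m) =>
          if ∃ t, z k t = j then 1 else 0) A 1) ↔
      ∃ σ : Fin n → Bool, ∀ k : Fin m,
        (∃ t, σ (z k t) = true) ∧ (∃ t, σ (z k t) = false) := by
  have hclause (k : Fin m) (j : Fin n) : (∃ t, z k t = j) ↔ j ∈ univ.image (z k) := by simp
  have hcard (k : Fin m) : #(univ.image (z k)) = 3 := by
    rw [card_image_of_injective _ (hz k), card_univ, Fintype.card_fin]
  simp only [hclause, exists_isAllocation_fin_two_iff, weakSEF_pair_indicator_iff,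
    card_le_card_add_one_iff_nonempty_of_card_eq_three (hcard _),
    exists_finset_splitting_iff_exists_bool]
  simp only [mem_image, mem_univ, true_and, exists_exists_eq_and]
end

section
/- Correctness of the reduction from 3-Dimensional Matching to strong sEFc allocation verification: let X, Y, Z be pairwise disjoint sets each of size n, and T ⊆ X × Y × Z a set of triples with |T| > n. Construct the MDFA instance with two identical agents, items M = T ∪ {g*}, dimensions L = X ∪ Y ∪ Z, valuations v(t)_w = 1 if t = (x,y,z) and w ∈ {x,y,z} and v(t)_w = 0 otherwise, and v(g*)_w = 1 for all w ∈ L. Then the allocation A = ({g*}, T) is strong sEF(|T| − n) if and only if there exists a perfect matching T' ⊆ T, i.e., a subset such that every element of X ∪ Y ∪ Z appears in exactly one triple of T'. -/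
/-! Each triple of `T ⊆ X × Y × Z` contains exactly three elements of `X ∪ Y ∪ Z`, so the cover
counts of any `S ⊆ T` sum to `3 |S|`, whereas `|X ∪ Y ∪ Z| = 3n`. Agent 1 stops envying agent 0
once `g*` is removed. Agent 0 values `{g*}` at `1` in every dimension, so the allocation is strong
sEF`(|T| - n)` iff the triples that survive the removal, at least `n` of them, cover every element
at most once. By the count such a set has exactly `n` triples and covers every element exactly
once; conversely a perfect matching has `n` triples. -/

open Finset Function

section Bookkeeping

variable {α : Type*} [DecidableEq α]

lemma exists_sdiff_iff_exists_subset {κ : Type*} {U : Finset α} {m : ℕ} (hm : m ≤ #U)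
    (f : α → κ → ℕ) (b : κ → ℕ) :
    (∃ R ⊆ U, #R ≤ #U - m ∧ ∀ k, ∑ g ∈ U \ R, f g k ≤ b k) ↔
      ∃ B ⊆ U, m ≤ #B ∧ ∀ k, ∑ g ∈ B, f g k ≤ b k := by
  constructor
  · rintro ⟨R, hRU, hR, hP⟩
    exact ⟨U \ R, sdiff_subset, by rw [card_sdiff_of_subset hRU]; omega, hP⟩
  · rintro ⟨B, hBU, hB, hP⟩
    refine ⟨U \ B, sdiff_subset, ?_, by rwa [Finset.sdiff_sdiff_eq_self hBU]⟩
    rw [card_sdiff_of_subset hBU]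
    omega

lemma exists_subset_compl_none_iff [Fintype α] {P : Finset (Option α) → Prop} :
    (∃ B ⊆ ({none} : Finset (Option α))ᶜ, P B) ↔ ∃ B : Finset α, P (B.map Embedding.some) := by
  constructor
  · rintro ⟨B, hB, hP⟩
    refine ⟨B.eraseNone, ?_⟩
    rwa [map_some_eraseNone, erase_eq_of_notMem (subset_compl_singleton.1 hB)]
  · rintro ⟨B, hP⟩
    exact ⟨_, subset_compl_singleton.2 (by simp), hP⟩

lemma exists_finset_subtype_iff {T : Finset α} {P : Finset α → Prop} :
    (∃ B : Finset {t // t ∈ T}, P (B.map (Embedding.subtype _))) ↔ ∃ S ⊆ T, P S := by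
  constructor
  · rintro ⟨B, hP⟩
    exact ⟨_, fun _ ht => property_of_mem_map_subtype B ht, hP⟩
  · rintro ⟨S, hST, hP⟩
    exact ⟨S.subtype (· ∈ T), by rwa [subtype_map_of_mem hST]⟩

end Bookkeeping

lemma strongSEF_fin_two_iff {Item Dim : Type*} [DecidableEq Item]
    {v : Fin 2 → Item → Dim → ℕ} {A₀ A₁ : Finset Item} {c : ℕ} :
    StrongSEF v ![A₀, A₁] c ↔
      (∃ R ⊆ A₁, #R ≤ c ∧ ∀ k, ∑ g ∈ A₁ \ R, v 0 g k ≤ ∑ g ∈ A₀, v 0 g k) ∧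
      (∃ R ⊆ A₀, #R ≤ c ∧ ∀ k, ∑ g ∈ A₀ \ R, v 1 g k ≤ ∑ g ∈ A₁, v 1 g k) := by
  refine ⟨fun h => ⟨h 0 1 (by decide), h 1 0 (by decide)⟩, fun ⟨h₀, h₁⟩ i i' hii' => ?_⟩
  fin_cases i <;> fin_cases i' <;> simp_all

section Matching

variable {W : Type*} [DecidableEq W]

def coverCount (S : Finset (W × W × W)) (w : W) : ℕ :=
  #{t ∈ S | w = t.1 ∨ w = t.2.1 ∨ w = t.2.2}

lemma coverCount_eq_one_iff {S : Finset (W × W × W)} {w : W} :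
    coverCount S w = 1 ↔ ∃! t, t ∈ S ∧ (w = t.1 ∨ w = t.2.1 ∨ w = t.2.2) := by
  simp only [coverCount, card_eq_one_iff_existsUnique, mem_filter]

lemma coverCount_map_subtype {T : Finset (W × W × W)} (B : Finset {t // t ∈ T}) (w : W) :
    coverCount (B.map (Embedding.subtype _)) w =
      ∑ t ∈ B, if w = t.1.1 ∨ w = t.1.2.1 ∨ w = t.1.2.2 then 1 else 0 := by
  rw [coverCount, card_filter, sum_map]
  rfl

variable {X Y Z : Finset W}

lemma card_filter_mem_triple (hXY : Disjoint X Y) (hXZ : Disjoint X Z) (hYZ : Disjoint Y Z)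
    {t : W × W × W} (ht : t ∈ X ×ˢ Y ×ˢ Z) :
    #{w ∈ X ∪ Y ∪ Z | w = t.1 ∨ w = t.2.1 ∨ w = t.2.2} = 3 := by
  obtain ⟨hx, hy, hz⟩ : t.1 ∈ X ∧ t.2.1 ∈ Y ∧ t.2.2 ∈ Z := by simpa [mem_product] using ht
  rw [card_eq_three]
  refine ⟨t.1, t.2.1, t.2.2, fun h => disjoint_left.1 hXY hx (h ▸ hy),
    fun h => disjoint_left.1 hXZ hx (h ▸ hz), fun h => disjoint_left.1 hYZ hy (h ▸ hz), ?_⟩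
  ext w
  simp only [mem_filter, mem_union, mem_insert, mem_singleton]
  constructor
  · exact And.right
  · rintro (rfl | rfl | rfl) <;> simp [hx, hy, hz]

lemma sum_coverCount (hXY : Disjoint X Y) (hXZ : Disjoint X Z) (hYZ : Disjoint Y Z)
    {S : Finset (W × W × W)} (hS : S ⊆ X ×ˢ Y ×ˢ Z) :
    ∑ w ∈ X ∪ Y ∪ Z, coverCount S w = 3 * #S := by
  simp only [coverCount, card_filter]
  rw [sum_comm]
  simp only [← card_filter]
  rw [sum_congr rfl fun t ht => card_filter_mem_triple hXY hXZ hYZ (hS ht), sum_const,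
    smul_eq_mul, mul_comm]

lemma exists_packing_iff_exists_exactCover {n : ℕ} (hXY : Disjoint X Y) (hXZ : Disjoint X Z)
    (hYZ : Disjoint Y Z) (hX : #X = n) (hY : #Y = n) (hZ : #Z = n) {T : Finset (W × W × W)}
    (hT : T ⊆ X ×ˢ Y ×ˢ Z) :
    (∃ S ⊆ T, n ≤ #S ∧ ∀ w ∈ X ∪ Y ∪ Z, coverCount S w ≤ 1) ↔
      ∃ S ⊆ T, ∀ w ∈ X ∪ Y ∪ Z, coverCount S w = 1 := by
  have hD : ∑ _w ∈ X ∪ Y ∪ Z, 1 = 3 * n := by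
    rw [sum_const, smul_eq_mul, mul_one,
      card_union_of_disjoint (disjoint_union_left.2 ⟨hXZ, hYZ⟩), card_union_of_disjoint hXY,
      hX, hY, hZ]
    ring
  constructor
  · rintro ⟨S, hST, hn, hle⟩
    refine ⟨S, hST, (sum_eq_sum_iff_of_le hle).1 (le_antisymm (sum_le_sum hle) ?_)⟩
    rw [hD, sum_coverCount hXY hXZ hYZ (hST.trans hT)]
    omega
  · rintro ⟨S, hST, hexact⟩
    have hcard := sum_coverCount hXY hXZ hYZ (hST.trans hT)
    rw [sum_congr rfl hexact, hD] at hcard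
    exact ⟨S, hST, by omega, fun w hw => (hexact w hw).le⟩

end Matching

/-- Correctness of the reduction from 3-Dimensional Matching to
strong sEFc verification: for pairwise disjoint sets `X, Y, Z` of size `n` and a
set `T ⊆ X × Y × Z` of triples with `|T| > n`, in the two-identical-agent
instance with items `T ∪ {g*}` (here `none = g*`), dimensions `X ∪ Y ∪ Z`,
valuations `v t w = 1` iff `w` is a coordinate of the triple `t`, and
`v g* w = 1` for all `w`, the allocation `({g*}, T)` is strong sEF`(|T| - n)` iff
`T` contains a perfect matching, i.e. a subset `T'` such that every element of
`X ∪ Y ∪ Z` lies in exactly one triple of `T'`. -/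
theorem strong_sEFc_iff_threeDM {W : Type*} [DecidableEq W] (n : ℕ)
    (X Y Z : Finset W) (hXY : Disjoint X Y) (hXZ : Disjoint X Z) (hYZ : Disjoint Y Z)
    (hX : X.card = n) (hY : Y.card = n) (hZ : Z.card = n)
    (T : Finset (W × W × W)) (hT : ∀ t ∈ T, t.1 ∈ X ∧ t.2.1 ∈ Y ∧ t.2.2 ∈ Z)
    (hTn : n < T.card) :
    (StrongSEF (Dim := {w // w ∈ X ∪ Y ∪ Z})
        (fun (_ : Fin 2) (g : Option {t // t ∈ T}) (w : {w // w ∈ X ∪ Y ∪ Z}) =>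
          match g with
          | none => 1
          | some t => if w.1 = t.1.1 ∨ w.1 = t.1.2.1 ∨ w.1 = t.1.2.2 then 1 else 0)
        ![{none}, ({none} : Finset (Option {t // t ∈ T}))ᶜ] (T.card - n)) ↔
      ∃ T' ⊆ T, ∀ w ∈ X ∪ Y ∪ Z,
        ∃! t : W × W × W, t ∈ T' ∧ (w = t.1 ∨ w = t.2.1 ∨ w = t.2.2) := by
  have hTXYZ : T ⊆ X ×ˢ Y ×ˢ Z := fun t ht => by simpa [mem_product] using hT t ht
  have hcompl : #({none} : Finset (Option {t // t ∈ T}))ᶜ = #T := by simp [card_compl]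
  simp_rw [← coverCount_eq_one_iff]
  rw [← exists_packing_iff_exists_exactCover hXY hXZ hYZ hX hY hZ hTXYZ,
    ← exists_finset_subtype_iff, strongSEF_fin_two_iff,
    and_iff_left ⟨{none}, subset_rfl, by rw [card_singleton]; omega, by simp⟩, ← hcompl,
    exists_sdiff_iff_exists_subset (hcompl ▸ hTn.le), exists_subset_compl_none_iff]
  simp only [sum_singleton, sum_map, card_map, Embedding.some_apply, coverCount_map_subtype,
    Subtype.forall]
end

section
/- Correctness of the reduction from one-dimensional envy-free existence to strong sEFc existence in nc dimensions: given a one-dimensional instance with agents N = [n], items M = {g_1, …, g_m}, and valuations v_i : M → ℤ_{≥0}, and a positive integer c, construct the MDFA instance with agents N, items M̂ = M ∪ {g_{m+1}, …, g_{m+nc}}, dimensions L̂ = [nc], and valuations v̂_{ijk} = v_{ij} if j ≤ m; v̂_{ijk} = Σ_{j'=1}^m v_{ij'} + 1 if j > m and j − m = k; and v̂_{ijk} = 0 otherwise. Then the constructed instance admits a strong sEFc allocation if and only if the original one-dimensional instance admits an envy-free allocation (i.e., an allocation A with v_i(A_i) ≥ v_i(A_{i'}) for all agents i, i'). -/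
/-!
Every agent values the dummy item `j` in dimension `j` above all original items together, so
in a strong sEF`c` allocation the removal set for a pair `(i, i')` must contain every dummy of
`i'`. Hence each agent holds at most `c` dummies; as there are `n·c` of them, each holds exactly
`c`, so the removal set consists of dummies only. In a dimension `k` whose dummy agent `i` does
not own, the inequality then reads `v i (A i') ≤ v i (A i)` on the original items. Conversely,
from an envy-free allocation, hand out the dummies in blocks of `c` and remove them all.
-/

open Finset

section Allocation

variable {n : ℕ} {α β : Type*} [DecidableEq α] [DecidableEq β]

def EnvyFree (v : Fin n → α → ℕ) (A : Fin n → Finset α) : Prop :=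
  ∀ i i' : Fin n, ∑ g ∈ A i', v i g ≤ ∑ g ∈ A i, v i g

theorem IsAllocation.toLeft {B : Fin n → Finset (α ⊕ β)} (hB : IsAllocation B) :
    IsAllocation fun i => (B i).toLeft :=
  ⟨fun a => (hB.1 (.inl a)).imp fun _ => mem_toLeft.2,
    fun i i' h => disjoint_left.2 fun _ ha ha' =>
      disjoint_left.1 (hB.2 i i' h) (mem_toLeft.1 ha) (mem_toLeft.1 ha')⟩

theorem IsAllocation.toRight {B : Fin n → Finset (α ⊕ β)} (hB : IsAllocation B) :
    IsAllocation fun i => (B i).toRight :=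
  ⟨fun b => (hB.1 (.inr b)).imp fun _ => mem_toRight.2,
    fun i i' h => disjoint_left.2 fun _ hb hb' =>
      disjoint_left.1 (hB.2 i i' h) (mem_toRight.1 hb) (mem_toRight.1 hb')⟩

theorem IsAllocation.disjSum {A : Fin n → Finset α} {D : Fin n → Finset β}
    (hA : IsAllocation A) (hD : IsAllocation D) : IsAllocation fun i => (A i).disjSum (D i) := by
  refine ⟨?_, fun i i' h => ?_⟩
  · rintro (a | b)
    · exact (hA.1 a).imp fun _ => inl_mem_disjSum.2
    · exact (hD.1 b).imp fun _ => inr_mem_disjSum.2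
  · rw [disjoint_left]
    rintro (a | b) h₁ h₂
    · exact disjoint_left.1 (hA.2 i i' h) (inl_mem_disjSum.1 h₁) (inl_mem_disjSum.1 h₂)
    · exact disjoint_left.1 (hD.2 i i' h) (inr_mem_disjSum.1 h₁) (inr_mem_disjSum.1 h₂)

theorem IsAllocation.sum_card [Fintype α] {A : Fin n → Finset α} (hA : IsAllocation A) :
    ∑ i, (A i).card = Fintype.card α := by
  have hcover : univ.biUnion A = univ :=
    eq_univ_of_forall fun g => mem_biUnion.2 ((hA.1 g).imp fun i hi => ⟨mem_univ i, hi⟩)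
  rw [← card_univ, ← hcover, card_biUnion fun i _ i' _ h => hA.2 i i' h]

def equivBlocks {κ : Type*} [Fintype κ] (e : Fin n × κ ≃ β) (i : Fin n) : Finset β :=
  univ.image fun r => e (i, r)

theorem isAllocation_equivBlocks {κ : Type*} [Fintype κ] (e : Fin n × κ ≃ β) :
    IsAllocation (equivBlocks e) := by
  refine ⟨fun b => ⟨(e.symm b).1, mem_image.2 ⟨(e.symm b).2, mem_univ _, by simp⟩⟩,
    fun i i' h => disjoint_left.2 ?_⟩
  simp only [equivBlocks, mem_image, mem_univ, true_and]
  rintro _ ⟨r, rfl⟩ ⟨r', hr'⟩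
  exact h (congrArg Prod.fst (e.injective hr')).symm

theorem card_equivBlocks {κ : Type*} [Fintype κ] (e : Fin n × κ ≃ β) (i : Fin n) :
    (equivBlocks e i).card = Fintype.card κ :=
  card_image_of_injective _ fun _ _ h => congrArg Prod.snd (e.injective h)

end Allocation

section Reduction

variable {n c : ℕ} {Item Dim : Type*} [Fintype Item] [DecidableEq Item] [DecidableEq Dim]
  {v : Fin n → Item → ℕ}

/-- The valuation `v̂` of the reduction, with dummy items `Sum.inr j` indexed by the dimensions. -/
def reductionValuation (v : Fin n → Item → ℕ) (i : Fin n) (g : Item ⊕ Dim) (k : Dim) : ℕ :=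
  Sum.elim (fun g' => v i g') (fun j => if j = k then (∑ g' : Item, v i g') + 1 else 0) g

theorem sum_reductionValuation (S : Finset (Item ⊕ Dim)) (i : Fin n) (k : Dim) :
    ∑ g ∈ S, reductionValuation v i g k =
      ∑ a ∈ S.toLeft, v i a + if k ∈ S.toRight then (∑ a, v i a) + 1 else 0 := by
  rw [sum_sum_eq_sum_toLeft_add_sum_toRight]
  simp [reductionValuation, sum_ite_eq']

theorem sum_reductionValuation_lt {S T : Finset (Item ⊕ Dim)} {j : Dim} (hS : .inr j ∉ S)
    (hT : .inr j ∈ T) (i : Fin n) :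
    ∑ g ∈ S, reductionValuation v i g j < ∑ g ∈ T, reductionValuation v i g j := by
  rw [sum_reductionValuation, sum_reductionValuation, if_neg (by simpa), if_pos (by simpa)]
  have := sum_le_sum_of_subset (f := v i) (subset_univ S.toLeft)
  omega

theorem strongSEF_reductionValuation_disjSum {A : Fin n → Finset Item} {D : Fin n → Finset Dim}
    (hA : EnvyFree v A) (hD : ∀ i, (D i).card ≤ c) :
    StrongSEF (reductionValuation v) (fun i => (A i).disjSum (D i)) c := by
  intro i i' _
  refine ⟨(∅ : Finset Item).disjSum (D i'), disjSum_mono (empty_subset _) subset_rfl,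
    by simpa using hD i', fun k => ?_⟩
  rw [sum_reductionValuation, sum_reductionValuation]
  simp only [toLeft_sdiff, toRight_sdiff, toLeft_disjSum, toRight_disjSum, sdiff_empty,
    sdiff_self, bot_eq_empty, notMem_empty, if_false, add_zero]
  exact le_add_right (hA i i')

variable {B : Fin n → Finset (Item ⊕ Dim)}

theorem StrongSEF.exists_toRight_subset (hB : IsAllocation B)
    (hsef : StrongSEF (reductionValuation v) B c) {p q : Fin n} (hpq : p ≠ q) :
    ∃ X ⊆ B q, X.card ≤ c ∧ (B q).toRight ⊆ X.toRight ∧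
      ∀ k, ∑ g ∈ B q \ X, reductionValuation v p g k ≤ ∑ g ∈ B p, reductionValuation v p g k := by
  obtain ⟨X, hXsub, hXcard, hle⟩ := hsef p q hpq
  refine ⟨X, hXsub, hXcard, fun j hj => ?_, hle⟩
  by_contra hjX
  have hjp : .inr j ∉ B p := fun h => disjoint_left.1 (hB.2 p q hpq) h (mem_toRight.1 hj)
  exact (hle j).not_gt (sum_reductionValuation_lt hjp (by simp_all) p)

theorem StrongSEF.card_toRight_eq [Fintype Dim] (hcard : Fintype.card Dim = n * c)
    (hn : 2 ≤ n) (hB : IsAllocation B) (hsef : StrongSEF (reductionValuation v) B c) (q : Fin n) :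
    (B q).toRight.card = c := by
  have : Nontrivial (Fin n) := Fin.nontrivial_iff_two_le.2 hn
  have hle : ∀ q ∈ univ, (B q).toRight.card ≤ c := fun q _ => by
    obtain ⟨p, hpq⟩ := exists_ne q
    obtain ⟨X, -, hXcard, hdummies, -⟩ := hsef.exists_toRight_subset hB hpq
    exact (card_le_card hdummies).trans (card_toRight_le.trans hXcard)
  have hsum : ∑ q, (B q).toRight.card = ∑ _q : Fin n, c := by
    simp [hB.toRight.sum_card, hcard]
  exact (sum_eq_sum_iff_of_le hle).1 hsum q (mem_univ q)

theorem envyFree_toLeft_of_strongSEF [Fintype Dim] (hc : 0 < c)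
    (hcard : Fintype.card Dim = n * c) (hB : IsAllocation B)
    (hsef : StrongSEF (reductionValuation v) B c) : EnvyFree v fun i => (B i).toLeft := by
  intro i i'
  rcases eq_or_ne i i' with rfl | hne
  · exact le_rfl
  have hn : 2 ≤ n := Fin.nontrivial_iff_two_le.1 ⟨i, i', hne⟩
  have hcardR := hsef.card_toRight_eq hcard hn hB
  obtain ⟨X, -, hXcard, hdummies, hle⟩ := hsef.exists_toRight_subset hB hne
  have hXleft : X.toLeft = ∅ := by
    have := card_toLeft_add_card_toRight (u := X)
    have := card_le_card hdummies
    have := hcardR i'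
    exact card_eq_zero.1 (by omega)
  obtain ⟨k, -, hk⟩ : ∃ k ∈ univ, k ∉ (B i).toRight := by
    refine exists_mem_notMem_of_card_lt_card ?_
    rw [hcardR, card_univ, hcard]
    exact (Nat.lt_mul_iff_one_lt_left hc).2 hn
  calc ∑ a ∈ (B i').toLeft, v i a = ∑ a ∈ (B i' \ X).toLeft, v i a := by
        rw [toLeft_sdiff, hXleft, sdiff_empty]
    _ ≤ ∑ g ∈ B i' \ X, reductionValuation v i g k := by
        rw [sum_reductionValuation]; exact le_add_right le_rfl
    _ ≤ ∑ g ∈ B i, reductionValuation v i g k := hle k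
    _ = ∑ a ∈ (B i).toLeft, v i a := by rw [sum_reductionValuation, if_neg hk, add_zero]

end Reduction

/-- Correctness of the reduction from one-dimensional envy-free
existence to strong sEF`c` existence in `n·c` dimensions: given a one-dimensional
instance with `n` agents, items `Item`, valuations `v`, and a positive integer
`c`, the MDFA instance with items `Item ⊕ Fin (n·c)`, dimensions `Fin (n·c)`, and
valuations `v̂ i g k = v i g` for original items `g`, `v̂ i (extra j) k =
(∑ g, v i g) + 1` if `j = k` and `0` otherwise, admits a strong sEF`c` allocation
iff the original instance admits an envy-free allocation. -/
theorem strong_sEFc_iff_envyFree {Item : Type*} [Fintype Item] [DecidableEq Item]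
    (n c : ℕ) (hc : 0 < c) (v : Fin n → Item → ℕ) :
    (∃ B : Fin n → Finset (Item ⊕ Fin (n * c)), IsAllocation B ∧
        StrongSEF (fun (i : Fin n) (g : Item ⊕ Fin (n * c)) (k : Fin (n * c)) =>
          Sum.elim (fun g' => v i g')
            (fun j => if j = k then (∑ g' : Item, v i g') + 1 else 0) g) B c) ↔
      ∃ A : Fin n → Finset Item, IsAllocation A ∧
        ∀ i i' : Fin n, ∑ g ∈ A i', v i g ≤ ∑ g ∈ A i, v i g := by
  constructor
  · rintro ⟨B, hB, hsef⟩
    exact ⟨_, hB.toLeft, envyFree_toLeft_of_strongSEF hc (Fintype.card_fin _) hB hsef⟩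
  · rintro ⟨A, hA, hef⟩
    refine ⟨_, hA.disjSum (isAllocation_equivBlocks finProdFinEquiv),
      strongSEF_reductionValuation_disjSum hef fun i => ?_⟩
    rw [card_equivBlocks, Fintype.card_fin]
end
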